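/- Let A ∈ {0,1}^{m×n} be a binary measurement matrix with no all-zero column, let x ∈ ℝ^n_{≥0} with y = Ax, and let T be a nonempty subset of supp(x) satisfying the termatiko condition. Then for every v ∈ T and every iteration ℓ ≥ 0 of the IPA run on (y, A), μ^{(ℓ)}_v ≠ x_v; i.e., no position of T is ever recovered by the IPA. -/

import Mathlib

open scoped Classical
open Finset

variable {C V : Type*} [Fintype C] [Fintype V]

/-- The IPA lower/upper bounds `(μ^{(ℓ)}, M^{(ℓ)})` computed from measurement
matrix `A` and measurement vector `y`. -/
noncomputable def ipa (A : C → V → ℝ) (y : C → ℝ) : ℕ → (V → ℝ) × (V → ℝ)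
  | 0 => (fun _ => 0,
      fun v => sInf {r : ℝ | ∃ c, A c v ≠ 0 ∧ r = y c / A c v})
  | ℓ + 1 =>
      (fun v => sSup {r : ℝ | ∃ c, A c v ≠ 0 ∧
          r = max 0 ((y c - ∑ v' ∈ Finset.univ.filter (fun v' => v' ≠ v),
              A c v' * (ipa A y ℓ).2 v') / A c v)},
       fun v => sInf {r : ℝ | ∃ c, A c v ≠ 0 ∧
          r = (y c - ∑ v' ∈ Finset.univ.filter (fun v' => v' ≠ v),
              A c v' * (ipa A y ℓ).1 v') / A c v})

/-- IPA lower bound `μ^{(ℓ)}_v`. -/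
noncomputable def ipaMu (A : C → V → ℝ) (y : C → ℝ) (ℓ : ℕ) (v : V) : ℝ := (ipa A y ℓ).1 v

/-- IPA upper bound `M^{(ℓ)}_v`. -/
noncomputable def ipaM (A : C → V → ℝ) (y : C → ℝ) (ℓ : ℕ) (v : V) : ℝ := (ipa A y ℓ).2 v

/-- Neighbourhood `N(v)` of a variable node. -/
noncomputable def Nv (A : C → V → ℝ) (v : V) : Finset C := Finset.univ.filter fun c => A c v ≠ 0

/-- Neighbourhood `N(c)` of a measurement node. -/
noncomputable def Nc (A : C → V → ℝ) (c : C) : Finset V := Finset.univ.filter fun v => A c v ≠ 0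

/-- Neighbourhood `N(T)` of a set of variable nodes. -/
noncomputable def NT (A : C → V → ℝ) (T : Finset V) : Finset C :=
  Finset.univ.filter fun c => ∃ v ∈ T, A c v ≠ 0

/-- `N_T(c) = N(c) ∩ T`. -/
noncomputable def NTc (A : C → V → ℝ) (T : Finset V) (c : C) : Finset V :=
  T.filter fun v => A c v ≠ 0

/-- A stopping set: every neighbouring measurement node is connected at least twice to `T`. -/
def StoppingSet (A : C → V → ℝ) (T : Finset V) : Prop :=
  ∀ c ∈ NT A T, 2 ≤ (NTc A T c).card

/-- The set `S` of variable nodes outside `T` connected only to `N(T)`. -/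
noncomputable def Sset (A : C → V → ℝ) (T : Finset V) : Finset V :=
  Finset.univ.filter fun v => v ∉ T ∧ ∀ c, A c v ≠ 0 → c ∈ NT A T

/-- The termatiko condition on a set `T` of variable nodes. -/
def TermatikoCond (A : C → V → ℝ) (T : Finset V) : Prop :=
  ∀ c ∈ NT A T,
    (∃ v ∈ Sset A T, A c v ≠ 0) ∨
    2 ≤ ((NTc A T c).filter fun v => ∀ c', A c' v ≠ 0 → 2 ≤ (NTc A T c').card).card

/-- Real-valued indicator vector `1_T` of a set of variable nodes. -/
noncomputable def indVec (T : Finset V) : V → ℝ := fun v => if v ∈ T then 1 else 0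

/-- The measurement vector `A · 1_T`. -/
noncomputable def measT (A : C → V → ℝ) (T : Finset V) : C → ℝ :=
  fun c => ∑ v, A c v * indVec T v

/-- `T` is a termatiko set of `A`: the IPA run on `A · 1_T` keeps all lower bounds at zero. -/
def IsTermatiko (A : C → V → ℝ) (T : Finset V) : Prop :=
  ∀ (ℓ : ℕ) (v : V), ipaMu A (measT A T) ℓ v = 0

/-- `A` is a binary (0/1) matrix. -/
def Binary (A : C → V → ℝ) : Prop := ∀ c v, A c v = 0 ∨ A c v = 1

/-- `A` has no all-zero column. -/
def NoZeroCol (A : C → V → ℝ) : Prop := ∀ v, ∃ c, A c v ≠ 0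

/-- `A` has nonnegative entries. -/
def MatNonneg (A : C → V → ℝ) : Prop := ∀ c v, 0 ≤ A c v

/-!
Along the IPA run, `μ ≤ x ≤ M` holds at every iteration, and the gaps are strict on two families
of nodes that keep each other open: `μ_v < x_v` on `T`, and `x_v < M_v` on `P = T̂ ∪ S`, where `T̂`
are the nodes of `T` all of whose checks meet `T` at least twice. The termatiko condition says
exactly that every check of a node of `T` also meets `P` elsewhere, so its lower message is
pushed strictly below `x_v` by the slack of an upper bound; conversely every check of a node of `P`
meets `T` elsewhere, so its upper message is pushed strictly above `x_v` by the slack of a lower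
bound. Initially the slack on `T` is `x > 0` itself.
-/

section Development

-- Fresh type variables, so that each lemma assumes only the finiteness instances it uses.
variable {C V : Type*}

noncomputable def sumExcept [Fintype V] (A : C → V → ℝ) (c : C) (v : V) (f : V → ℝ) : ℝ :=
  ∑ v' ∈ univ.filter (fun v' => v' ≠ v), A c v' * f v'

noncomputable def ipaMsg [Fintype V] (A : C → V → ℝ) (y : C → ℝ) (c : C) (v : V) (f : V → ℝ) : ℝ :=
  (y c - sumExcept A c v f) / A c v

noncomputable def ipaUpper [Fintype V] (A : C → V → ℝ) (y : C → ℝ) (f : V → ℝ) (v : V) : ℝ :=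
  sInf {r : ℝ | ∃ c, A c v ≠ 0 ∧ r = ipaMsg A y c v f}

noncomputable def ipaLower [Fintype V] (A : C → V → ℝ) (y : C → ℝ) (g : V → ℝ) (v : V) : ℝ :=
  sSup {r : ℝ | ∃ c, A c v ≠ 0 ∧ r = max 0 (ipaMsg A y c v g)}

section Recursion

variable [Fintype V] (A : C → V → ℝ) (y : C → ℝ) (ℓ : ℕ)

lemma ipaMu_zero : ipaMu A y 0 = 0 := rfl

lemma ipaM_zero : ipaM A y 0 = ipaUpper A y 0 := by
  funext v
  simp [ipaM, ipa, ipaUpper, ipaMsg, sumExcept]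

lemma ipaMu_succ : ipaMu A y (ℓ + 1) = ipaLower A y (ipaM A y ℓ) := rfl

lemma ipaM_succ : ipaM A y (ℓ + 1) = ipaUpper A y (ipaMu A y ℓ) := rfl

end Recursion

section FiniteFamily

variable {α : Type*} {p : α → Prop} {f : α → ℝ} {b : ℝ}

lemma nonempty_setOf_exists_eq (h : ∃ a, p a) : {r : ℝ | ∃ a, p a ∧ r = f a}.Nonempty :=
  let ⟨a, ha⟩ := h; ⟨f a, a, ha, rfl⟩

lemma finite_setOf_exists_eq [Finite α] : {r : ℝ | ∃ a, p a ∧ r = f a}.Finite :=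
  (Set.finite_range f).subset (by rintro r ⟨a, _, rfl⟩; exact Set.mem_range_self a)

lemma csSup_setOf_exists_le (h : ∃ a, p a) (hb : ∀ a, p a → f a ≤ b) :
    sSup {r : ℝ | ∃ a, p a ∧ r = f a} ≤ b :=
  csSup_le (nonempty_setOf_exists_eq h) (by rintro r ⟨a, ha, rfl⟩; exact hb a ha)

lemma csSup_setOf_exists_lt [Finite α] (h : ∃ a, p a) (hb : ∀ a, p a → f a < b) :
    sSup {r : ℝ | ∃ a, p a ∧ r = f a} < b := by
  obtain ⟨a, ha, hr⟩ := (nonempty_setOf_exists_eq h).csSup_mem finite_setOf_exists_eq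
  exact hr ▸ hb a ha

lemma le_csInf_setOf_exists (h : ∃ a, p a) (hb : ∀ a, p a → b ≤ f a) :
    b ≤ sInf {r : ℝ | ∃ a, p a ∧ r = f a} :=
  le_csInf (nonempty_setOf_exists_eq h) (by rintro r ⟨a, ha, rfl⟩; exact hb a ha)

lemma lt_csInf_setOf_exists [Finite α] (h : ∃ a, p a) (hb : ∀ a, p a → b < f a) :
    b < sInf {r : ℝ | ∃ a, p a ∧ r = f a} := by
  obtain ⟨a, ha, hr⟩ := (nonempty_setOf_exists_eq h).csInf_mem finite_setOf_exists_eq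
  exact hr ▸ hb a ha

end FiniteFamily

lemma Binary.matNonneg {A : C → V → ℝ} (hbin : Binary A) : MatNonneg A := fun c v => by
  rcases hbin c v with h | h <;> simp [h]

section Messages

variable [Fintype V] {A : C → V → ℝ} {y : C → ℝ} {x f g : V → ℝ} {c : C} {v : V}

lemma sum_eq_add_sumExcept (A : C → V → ℝ) (c : C) (v : V) (f : V → ℝ) :
    ∑ v', A c v' * f v' = A c v * f v + sumExcept A c v f := by
  rw [sumExcept, filter_ne', ← add_sum_erase _ _ (mem_univ v)]

lemma sumExcept_mono (hA : MatNonneg A) (hfg : f ≤ g) (c : C) (v : V) :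
    sumExcept A c v f ≤ sumExcept A c v g :=
  sum_le_sum fun v' _ => mul_le_mul_of_nonneg_left (hfg v') (hA c v')

lemma sumExcept_lt_sumExcept (hA : MatNonneg A) (hfg : f ≤ g) {w : V} (hwv : w ≠ v)
    (hcw : A c w ≠ 0) (hw : f w < g w) : sumExcept A c v f < sumExcept A c v g :=
  sum_lt_sum (fun v' _ => mul_le_mul_of_nonneg_left (hfg v') (hA c v'))
    ⟨w, by simpa using hwv, mul_lt_mul_of_pos_left hw ((hA c w).lt_of_ne' hcw)⟩

lemma ipaMsg_eq (hy : y c = ∑ v', A c v' * x v') (hcv : A c v ≠ 0) :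
    ipaMsg A y c v f = x v + (sumExcept A c v x - sumExcept A c v f) / A c v := by
  rw [ipaMsg, hy, sum_eq_add_sumExcept A c v x]
  field_simp
  ring

end Messages

section Bounds

variable [Fintype V] {A : C → V → ℝ} {y : C → ℝ} {x f g : V → ℝ} {v : V}

lemma le_ipaUpper (hA : MatNonneg A) (hcol : NoZeroCol A) (hy : ∀ c, y c = ∑ v, A c v * x v)
    (hf : f ≤ x) (v : V) : x v ≤ ipaUpper A y f v :=
  le_csInf_setOf_exists (hcol v) fun c hcv => by
    rw [ipaMsg_eq (hy c) hcv]
    exact le_add_of_nonneg_right (div_nonneg (sub_nonneg.2 (sumExcept_mono hA hf c v)) (hA c v))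

lemma lt_ipaUpper [Finite C] (hA : MatNonneg A) (hcol : NoZeroCol A) (hy : ∀ c, y c = ∑ v, A c v * x v)
    (hf : f ≤ x) (hgap : ∀ c, A c v ≠ 0 → ∃ w ≠ v, A c w ≠ 0 ∧ f w < x w) :
    x v < ipaUpper A y f v :=
  lt_csInf_setOf_exists (hcol v) fun c hcv => by
    obtain ⟨w, hwv, hcw, hw⟩ := hgap c hcv
    rw [ipaMsg_eq (hy c) hcv]
    exact lt_add_of_pos_right _ (div_pos (sub_pos.2 (sumExcept_lt_sumExcept hA hf hwv hcw hw))
      ((hA c v).lt_of_ne' hcv))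

lemma ipaLower_le (hA : MatNonneg A) (hcol : NoZeroCol A) (hy : ∀ c, y c = ∑ v, A c v * x v)
    (hx : 0 ≤ x v) (hg : x ≤ g) : ipaLower A y g v ≤ x v :=
  csSup_setOf_exists_le (hcol v) fun c hcv => max_le hx <| by
    rw [ipaMsg_eq (hy c) hcv]
    exact add_le_of_nonpos_right
      (div_nonpos_of_nonpos_of_nonneg (sub_nonpos.2 (sumExcept_mono hA hg c v)) (hA c v))

lemma ipaLower_lt [Finite C] (hA : MatNonneg A) (hcol : NoZeroCol A) (hy : ∀ c, y c = ∑ v, A c v * x v)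
    (hx : 0 < x v) (hg : x ≤ g) (hgap : ∀ c, A c v ≠ 0 → ∃ w ≠ v, A c w ≠ 0 ∧ x w < g w) :
    ipaLower A y g v < x v :=
  csSup_setOf_exists_lt (hcol v) fun c hcv => max_lt hx <| by
    obtain ⟨w, hwv, hcw, hw⟩ := hgap c hcv
    rw [ipaMsg_eq (hy c) hcv]
    exact add_lt_of_neg_right _ (div_neg_of_neg_of_pos
      (sub_neg.2 (sumExcept_lt_sumExcept hA hg hwv hcw hw)) ((hA c v).lt_of_ne' hcv))

end Bounds

def HasOtherNeighbourIn (A : C → V → ℝ) (P T : Finset V) : Prop :=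
  ∀ v ∈ P, ∀ c, A c v ≠ 0 → ∃ t ∈ T, t ≠ v ∧ A c t ≠ 0

lemma HasOtherNeighbourIn.exists_gap {A : C → V → ℝ} {P T : Finset V}
    (h : HasOtherNeighbourIn A P T) {f g : V → ℝ} (hfg : ∀ t ∈ T, f t < g t) {v : V}
    (hv : v ∈ P) : ∀ c, A c v ≠ 0 → ∃ w ≠ v, A c w ≠ 0 ∧ f w < g w := fun c hcv =>
  let ⟨t, htT, htv, hct⟩ := h v hv c hcv
  ⟨t, htv, hct, hfg t htT⟩

section Invariants

variable [Fintype V] {A : C → V → ℝ} {y : C → ℝ} {x : V → ℝ}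

theorem ipa_sandwich (hA : MatNonneg A) (hcol : NoZeroCol A) (hx : 0 ≤ x)
    (hy : ∀ c, y c = ∑ v, A c v * x v) : ∀ ℓ, ipaMu A y ℓ ≤ x ∧ x ≤ ipaM A y ℓ
  | 0 => ⟨(ipaMu_zero A y).symm ▸ hx, (ipaM_zero A y).symm ▸ le_ipaUpper hA hcol hy hx⟩
  | ℓ + 1 =>
    have ih := ipa_sandwich hA hcol hx hy ℓ
    ⟨fun v => ipaLower_le hA hcol hy (hx v) ih.2, le_ipaUpper hA hcol hy ih.1⟩

theorem ipa_gaps [Finite C] (hA : MatNonneg A) (hcol : NoZeroCol A) (hx : 0 ≤ x)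
    (hy : ∀ c, y c = ∑ v, A c v * x v) {T P : Finset V} (hxT : ∀ t ∈ T, 0 < x t)
    (hPT : HasOtherNeighbourIn A P T) (hTP : HasOtherNeighbourIn A T P) :
    ∀ ℓ, (∀ v ∈ T, ipaMu A y ℓ v < x v) ∧ (∀ v ∈ P, x v < ipaM A y ℓ v)
  | 0 => ⟨hxT, fun _ hv => (ipaM_zero A y).symm ▸ lt_ipaUpper hA hcol hy hx (hPT.exists_gap hxT hv)⟩
  | ℓ + 1 =>
    have ⟨hTgap, hPgap⟩ := ipa_gaps hA hcol hx hy hxT hPT hTP ℓ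
    have ⟨hμ, hM⟩ := ipa_sandwich hA hcol hx hy ℓ
    ⟨fun v hv => ipaLower_lt hA hcol hy (hxT v hv) hM (hTP.exists_gap hPgap hv),
      fun _ hv => lt_ipaUpper hA hcol hy hμ (hPT.exists_gap hTgap hv)⟩

end Invariants

variable [Fintype C] [Fintype V]

noncomputable def protectedNodes (A : C → V → ℝ) (T : Finset V) : Finset V :=
  T.filter fun v => ∀ c', A c' v ≠ 0 → 2 ≤ (NTc A T c').card

lemma hasOtherNeighbourIn_protectedNodes_union_Sset (A : C → V → ℝ) (T : Finset V) :
    HasOtherNeighbourIn A (protectedNodes A T ∪ Sset A T) T := by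
  intro v hv c hcv
  rcases mem_union.1 hv with hv | hv
  · obtain ⟨t, ht, htv⟩ := exists_mem_ne ((mem_filter.1 hv).2 c hcv) v
    exact ⟨t, (mem_filter.1 ht).1, htv, (mem_filter.1 ht).2⟩
  · simp only [Sset, NT, mem_filter, mem_univ, true_and] at hv
    obtain ⟨t, htT, hct⟩ := hv.2 c hcv
    exact ⟨t, htT, fun htv => hv.1 (htv ▸ htT), hct⟩

lemma TermatikoCond.hasOtherNeighbourIn {A : C → V → ℝ} {T : Finset V}
    (hT : TermatikoCond A T) : HasOtherNeighbourIn A T (protectedNodes A T ∪ Sset A T) := by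
  intro v hv c hcv
  have hcN : c ∈ NT A T := mem_filter.2 ⟨mem_univ c, v, hv, hcv⟩
  rcases hT c hcN with ⟨w, hwS, hcw⟩ | htwo
  · exact ⟨w, mem_union_right _ hwS, fun hwv => (mem_filter.1 hwS).2.1 (hwv ▸ hv), hcw⟩
  · obtain ⟨t, ht, htv⟩ := exists_mem_ne (one_lt_two.trans_le htwo) v
    obtain ⟨htN, hprot⟩ := mem_filter.1 ht
    obtain ⟨htT, hct⟩ := mem_filter.1 htN
    exact ⟨t, mem_union_left _ (mem_filter.2 ⟨htT, hprot⟩), htv, hct⟩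

end Development

theorem termatiko_subset_never_recovered_general {m n : ℕ} (A : Fin m → Fin n → ℝ)
    (hbin : Binary A) (hcol : NoZeroCol A)
    (x : Fin n → ℝ) (hx : ∀ v, 0 ≤ x v)
    (y : Fin m → ℝ) (hy : ∀ c, y c = ∑ v, A c v * x v)
    (T : Finset (Fin n))
    (hsub : ∀ v ∈ T, x v ≠ 0) (hT : TermatikoCond A T) :
    ∀ v ∈ T, ∀ ℓ : ℕ, ipaMu A y ℓ v ≠ x v := by
  have hxT : ∀ v ∈ T, 0 < x v := fun v hv => (hx v).lt_of_ne' (hsub v hv)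
  intro v hv ℓ
  exact ((ipa_gaps hbin.matNonneg hcol hx hy hxT
    (hasOtherNeighbourIn_protectedNodes_union_Sset A T) hT.hasOtherNeighbourIn ℓ).1 v hv).ne

/-- if a nonempty `T ⊆ supp(x)` satisfies the termatiko condition,
then no position of `T` is ever recovered by the IPA run on `(y, A)`. -/
theorem termatiko_subset_never_recovered {m n : ℕ} (A : Fin m → Fin n → ℝ)
    (hbin : Binary A) (hcol : NoZeroCol A)
    (x : Fin n → ℝ) (hx : ∀ v, 0 ≤ x v)
    (y : Fin m → ℝ) (hy : ∀ c, y c = ∑ v, A c v * x v)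
    (T : Finset (Fin n)) (hne : T.Nonempty)
    (hsub : ∀ v ∈ T, x v ≠ 0) (hT : TermatikoCond A T) :
    ∀ v ∈ T, ∀ ℓ : ℕ, ipaMu A y ℓ v ≠ x v :=
  termatiko_subset_never_recovered_general A hbin hcol x hx y hy T hsub hT
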